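/- arXiv:1412.0881 — 4 statements merged into one kernel-verified Lean document; each statement's English description precedes it below -/
import Mathlib

section
/- In the graph G on ℚ⁺ ∪ ℚ⁻ with edges q⁺r⁻ for q < r, if an automorphism φ satisfies φ(q⁺) = r⁺ then φ(q⁻) = r⁻, and if φ(q⁺) = r⁻ then φ(q⁻) = r⁺. Consequently an automorphism of G is uniquely determined by its action on ℚ⁺. -/
open Sum

/-- The graph on two copies of ℚ with `inl q` adjacent to `inr r` iff `q < r`. -/
def G : SimpleGraph (ℚ ⊕ ℚ) where
  Adj u v := match u, v with
    | .inl q, .inr r => q < r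
    | .inr r, .inl q => q < r
    | _, _ => False
  symm := ⟨by intro u v h; cases u <;> cases v <;> simp_all⟩
  loopless := ⟨by intro u h; cases u <;> simp_all⟩

/-!
An isomorphism carries neighbourhoods to neighbourhoods and preserves strict inclusion between
them, so it preserves the relation "the neighbourhood of `w` consists of the vertices whose
neighbourhood strictly contains that of `v`". In `G` the neighbourhoods of `q⁺` and `q⁻` are
`(q, ∞)⁻` and `(-∞, q)⁺`, so this relation holds from `q⁺` to `q⁻` and from `q⁻` to `q⁺`; since
distinct vertices of `G` have distinct neighbourhoods, `φ (q⁻)` is forced by `φ (q⁺)`.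
-/

open Set Function

namespace SimpleGraph

variable {V W : Type*} {H : SimpleGraph V} {H' : SimpleGraph W}

def IsMate (H : SimpleGraph V) (v w : V) : Prop :=
  H.neighborSet w = {u | H.neighborSet v ⊂ H.neighborSet u}

theorem IsMate.unique (hN : Injective H.neighborSet) {v w w' : V}
    (hw : H.IsMate v w) (hw' : H.IsMate v w') : w = w' :=
  hN (hw.trans hw'.symm)

theorem Iso.isMate_apply (f : H ≃g H') {v w : V} (h : H.IsMate v w) :
    H'.IsMate (f v) (f w) := by
  ext u
  obtain ⟨x, rfl⟩ := f.surjective u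
  rw [mem_ofPred_eq, ← f.image_neighborSet, ← f.image_neighborSet, ← f.image_neighborSet,
    f.injective.mem_set_image,
    f.injective.injOn.image_ssubset_image_iff (subset_univ _) (subset_univ _), h, mem_ofPred_eq]

end SimpleGraph

theorem Set.not_image_inr_subset_image_inl {α β : Type*} {t : Set α} (ht : t.Nonempty)
    (s : Set β) : ¬ inr '' t ⊆ (inl '' s : Set (β ⊕ α)) :=
  fun h => (ht.image inr).ne_empty (disjoint_image_inl_image_inr.eq_bot_of_ge h)

theorem Set.not_image_inl_subset_image_inr {α β : Type*} {s : Set α} (hs : s.Nonempty)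
    (t : Set β) : ¬ inl '' s ⊆ (inr '' t : Set (α ⊕ β)) :=
  fun h => (hs.image inl).ne_empty (disjoint_image_inl_image_inr.eq_bot_of_le h)

theorem G_neighborSet_inl (q : ℚ) : G.neighborSet (inl q) = inr '' Ioi q := by
  ext (r | r) <;> simp [G]

theorem G_neighborSet_inr (q : ℚ) : G.neighborSet (inr q) = inl '' Iio q := by
  ext (r | r) <;> simp [G]

theorem G_neighborSet_injective : Injective G.neighborSet := by
  rintro (p | p) (q | q) h <;>
    simp only [G_neighborSet_inl, G_neighborSet_inr] at h
  · exact congrArg inl (Ioi_injective (inr_injective.image_injective h))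
  · exact absurd h.subset (not_image_inr_subset_image_inl nonempty_Ioi _)
  · exact absurd h.subset (not_image_inl_subset_image_inr nonempty_Iio _)
  · exact congrArg inr (Iio_injective (inl_injective.image_injective h))

theorem G_isMate_inl (q : ℚ) : G.IsMate (inl q) (inr q) := by
  ext (p | p) <;> simp only [mem_ofPred_eq, G_neighborSet_inl, G_neighborSet_inr]
  · rw [inl_injective.mem_set_image, inr_injective.injOn.image_ssubset_image_iff (subset_univ _)
      (subset_univ _), Ioi_ssubset_Ioi_iff, mem_Iio]
  · exact iff_of_false (by simp) fun h => not_image_inr_subset_image_inl nonempty_Ioi _ h.subset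

theorem G_isMate_inr (q : ℚ) : G.IsMate (inr q) (inl q) := by
  ext (p | p) <;> simp only [mem_ofPred_eq, G_neighborSet_inl, G_neighborSet_inr]
  · exact iff_of_false (by simp) fun h => not_image_inl_subset_image_inr nonempty_Iio _ h.subset
  · rw [inr_injective.mem_set_image, inl_injective.injOn.image_ssubset_image_iff (subset_univ _)
      (subset_univ _), Iio_ssubset_Iio_iff, mem_Ioi]

theorem G_aut_determined :
    (∀ (φ : G ≃g G) (q r : ℚ),
      (φ (inl q) = inl r → φ (inr q) = inr r) ∧
      (φ (inl q) = inr r → φ (inr q) = inl r)) ∧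
    ∀ φ ψ : G ≃g G, (∀ q : ℚ, φ (inl q) = ψ (inl q)) → φ = ψ := by
  have mate (φ : G ≃g G) (q : ℚ) : G.IsMate (φ (inl q)) (φ (inr q)) :=
    φ.isMate_apply (G_isMate_inl q)
  refine ⟨fun φ q r => ⟨fun h => ?_, fun h => ?_⟩, fun φ ψ h => RelIso.ext ?_⟩
  · exact (h ▸ mate φ q).unique G_neighborSet_injective (G_isMate_inl r)
  · exact (h ▸ mate φ q).unique G_neighborSet_injective (G_isMate_inr r)
  · rintro (q | q)
    · exact h q
    · exact (mate φ q).unique G_neighborSet_injective (h q ▸ mate ψ q)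
end

section
/- The graph G on ℚ⁺ ∪ ℚ⁻ with edges q⁺r⁻ for q < r is arc transitive: for any two ordered pairs of adjacent vertices (u₁, v₁) and (u₂, v₂), there is an automorphism φ of G with φ(u₁) = u₂ and φ(v₁) = v₂. -/
/-!
Every arc of `G` can be moved to the arc `(inl 0, inr 1)`: an arc `(inl q, inr r)` by the
automorphism that applies the affine order automorphism of `ℚ` sending `q, r` to `0, 1` on both
sides, and an arc `(inr r, inl q)` after first applying `inl x ↦ inr (-x)`, `inr x ↦ inl (-x)`.
Composing one such automorphism with the inverse of another gives arc transitivity.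
-/

open Sum

theorem OrderIso.exists_apply_eq_zero_and_apply_eq_one {K : Type*} [Field K] [LinearOrder K]
    [IsStrictOrderedRing K] {q r : K} (hqr : q < r) : ∃ f : K ≃o K, f q = 0 ∧ f r = 1 := by
  have hpos : 0 < r - q := sub_pos.mpr hqr
  refine ⟨(OrderIso.addRight (-q)).trans (OrderIso.divRight₀ (r - q) hpos), ?_, ?_⟩
  · simp
  · simp [← sub_eq_add_neg, hpos.ne']

namespace G

def ofOrderIso (f : ℚ ≃o ℚ) : G ≃g G where
  toEquiv := Equiv.sumCongr f.toEquiv f.toEquiv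
  map_rel_iff' := by rintro (q | q) (r | r) <;> simp [G]

def negSwap : G ≃g G where
  toEquiv := (Equiv.sumComm ℚ ℚ).trans (Equiv.sumCongr (Equiv.neg ℚ) (Equiv.neg ℚ))
  map_rel_iff' := by rintro (q | q) (r | r) <;> simp [G]

theorem exists_iso_apply_eq_inl_zero_and_apply_eq_inr_one {u v : ℚ ⊕ ℚ} (h : G.Adj u v) :
    ∃ φ : G ≃g G, φ u = inl 0 ∧ φ v = inr 1 := by
  match u, v, h with
  | inl q, inr r, (h : q < r) =>
    obtain ⟨f, hq, hr⟩ := OrderIso.exists_apply_eq_zero_and_apply_eq_one h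
    exact ⟨ofOrderIso f, by simp [ofOrderIso, hq], by simp [ofOrderIso, hr]⟩
  | inr r, inl q, (h : q < r) =>
    obtain ⟨f, hr, hq⟩ := OrderIso.exists_apply_eq_zero_and_apply_eq_one (neg_lt_neg h)
    exact ⟨negSwap.trans (ofOrderIso f), by simp [negSwap, ofOrderIso, hr],
      by simp [negSwap, ofOrderIso, hq]⟩

end G

theorem G_arc_transitive (u₁ v₁ u₂ v₂ : ℚ ⊕ ℚ) (h₁ : G.Adj u₁ v₁) (h₂ : G.Adj u₂ v₂) :
    ∃ φ : G ≃g G, φ u₁ = u₂ ∧ φ v₁ = v₂ := by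
  obtain ⟨φ₁, hu₁, hv₁⟩ := G.exists_iso_apply_eq_inl_zero_and_apply_eq_inr_one h₁
  obtain ⟨φ₂, hu₂, hv₂⟩ := G.exists_iso_apply_eq_inl_zero_and_apply_eq_inr_one h₂
  refine ⟨φ₁.trans φ₂.symm, ?_, ?_⟩
  · simp [hu₁, ← hu₂]
  · simp [hv₁, ← hv₂]
end

section
/- Every automorphism of the graph G on ℚ⁺ ∪ ℚ⁻ with edges q⁺r⁻ for q < r that fixes ℚ⁺ setwise is of the form γ↑ for some order automorphism γ of ℚ (i.e. it acts as an order-preserving bijection γ on both copies simultaneously). -/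
open Sum

/-!
Since `φ` preserves adjacency, its restrictions `f` to `ℚ⁺` and `g` to `ℚ⁻` satisfy
`f q < g r ↔ q < r`. Taking `q = r` gives `g ≤ f`, hence `f` is strictly monotone; surjectivity of
`f` and density of `ℚ` then rule out `g q < f q`, since a value `f p` strictly between them would
force both `p < q` and `f p < g q`.
-/

section

variable {α β : Type*} [LinearOrder α] [LinearOrder β] {f g : α → β}

theorem le_of_forall_lt_iff_lt (hfg : ∀ a b, f a < g b ↔ a < b) (a : α) : g a ≤ f a :=
  le_of_not_gt fun h => lt_irrefl a ((hfg a a).1 h)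

theorem strictMono_of_forall_lt_iff_lt (hfg : ∀ a b, f a < g b ↔ a < b) : StrictMono f :=
  fun a b hab => ((hfg a b).2 hab).trans_le (le_of_forall_lt_iff_lt hfg b)

theorem eq_of_forall_lt_iff_lt [DenselyOrdered β] (hfg : ∀ a b, f a < g b ↔ a < b)
    (hf : Function.Surjective f) : f = g := by
  funext a
  refine le_antisymm (le_of_not_gt fun hlt => ?_) (le_of_forall_lt_iff_lt hfg a)
  obtain ⟨c, hgc, hcf⟩ := exists_between hlt
  obtain ⟨b, rfl⟩ := hf c
  have hba : b < a := (strictMono_of_forall_lt_iff_lt hfg).lt_iff_lt.1 hcf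
  exact lt_asymm hgc ((hfg b a).2 hba)

end

theorem G_adj_inl_inr_iff {q r : ℚ} : G.Adj (inl q) (inr r) ↔ q < r := Iff.rfl

theorem not_G_adj_inl_inl (q r : ℚ) : ¬G.Adj (inl q) (inl r) := id

theorem exists_map_inr_eq_inr (φ : G ≃g G) (h : ∀ q : ℚ, ∃ r : ℚ, φ (inl q) = inl r)
    (q : ℚ) : ∃ r : ℚ, φ (inr q) = inr r := by
  obtain ⟨p, hp⟩ := h (q - 1)
  have hadj : G.Adj (φ (inl (q - 1))) (φ (inr q)) :=
    φ.map_adj_iff.2 (G_adj_inl_inr_iff.2 (sub_one_lt q))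
  rcases hφ : φ (inr q) with s | s
  · rw [hp, hφ] at hadj
    exact (not_G_adj_inl_inl _ _ hadj).elim
  · exact ⟨s, rfl⟩

theorem exists_map_inl_eq_inl (φ : G ≃g G) (h : ∀ q : ℚ, ∃ r : ℚ, φ (inl q) = inl r)
    (r : ℚ) : ∃ q : ℚ, φ (inl q) = inl r := by
  obtain ⟨q | q, hq⟩ := φ.surjective (inl r)
  · exact ⟨q, hq⟩
  · obtain ⟨s, hs⟩ := exists_map_inr_eq_inr φ h q
    exact (inr_ne_inl (hs.symm.trans hq)).elim

theorem G_aut_fixing_is_up (φ : G ≃g G) (h : ∀ q : ℚ, ∃ r : ℚ, φ (inl q) = inl r) :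
    ∃ γ : ℚ ≃o ℚ, ∀ q : ℚ, φ (inl q) = inl (γ q) ∧ φ (inr q) = inr (γ q) := by
  have hinr := exists_map_inr_eq_inr φ h
  have hinl := exists_map_inl_eq_inl φ h
  choose f hf using h
  choose g hg using hinr
  have hfg : ∀ q r, f q < g r ↔ q < r := fun q r => by
    simpa only [hf, hg, G_adj_inl_inr_iff] using (φ.map_adj_iff (v := inl q) (w := inr r))
  have hsurj : Function.Surjective f := fun r => by
    obtain ⟨q, hq⟩ := hinl r
    exact ⟨q, inl_injective ((hf q).symm.trans hq)⟩
  obtain rfl := eq_of_forall_lt_iff_lt hfg hsurj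
  exact ⟨(strictMono_of_forall_lt_iff_lt hfg).orderIsoOfSurjective f hsurj,
    fun q => ⟨hf q, hg q⟩⟩
end

section
/- The graph G on ℚ⁺ ∪ ℚ⁻ with edges q⁺r⁻ for q < r admits no distinguishing colouring with finitely many colours: for every finite set C and every colouring c : V → C there is a non-identity automorphism of G preserving c. -/
/-! An order automorphism `f` of `ℚ` acts on `G` by `inl q ↦ inl (f q)`, `inr q ↦ inr (f q)`, so it
suffices to find a nontrivial automorphism of `ℚ` preserving the finite colouring
`q ↦ (c (inl q), c (inr q))`. An interval `(a, b)` meeting the fewest colours meets each of them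
densely; the back-and-forth argument, run with colour-preserving partial isomorphisms, then gives a
colour-preserving automorphism of `(a, b)` moving some point, and the identity outside `(a, b)`
extends it to `ℚ`. -/

open Sum

open Set

namespace Order

variable {X C : Type*} [LinearOrder X]

def IsDenseColoring (e : X → C) : Prop :=
  ∀ w u v : X, u < v → ∃ z, u < z ∧ z < v ∧ e z = e w

variable {e : X → C}

theorem IsDenseColoring.exists_between_finsets [NoMinOrder X] [NoMaxOrder X] [Nonempty X]
    (he : IsDenseColoring e) (w : X) (lo hi : Finset X) (hlt : ∀ x ∈ lo, ∀ y ∈ hi, x < y) :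
    ∃ m, (∀ x ∈ lo, x < m) ∧ (∀ y ∈ hi, m < y) ∧ e m = e w := by
  have : DenselyOrdered X := ⟨fun u v huv => (he u u v huv).imp fun _ hz => ⟨hz.1, hz.2.1⟩⟩
  obtain ⟨u, hlo, hu⟩ := Order.exists_between_finsets lo hi hlt
  obtain ⟨v, hlo', hv⟩ := Order.exists_between_finsets (insert u lo) hi <| by
    simpa only [Finset.forall_mem_insert] using ⟨hu, hlt⟩
  obtain ⟨m, hum, hmv, hm⟩ := he w u v (hlo' u (Finset.mem_insert_self _ _))
  exact ⟨m, fun x hx => (hlo x hx).trans hum, fun y hy => hmv.trans (hv y hy), hm⟩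

theorem PartialIso.mem_comm_iff {α β : Type*} [LinearOrder α] [LinearOrder β]
    {f : PartialIso α β} {a : α} {b : β} : (b, a) ∈ f.comm.val ↔ (a, b) ∈ f.val := by
  simp [PartialIso.comm, Subtype.map]

variable (e) in
def ColoredPartialIso : Type _ :=
  { f : PartialIso X X // ∀ p ∈ f.val, e p.1 = e p.2 }

noncomputable instance : Preorder (ColoredPartialIso e) := Subtype.preorder _

namespace ColoredPartialIso

protected def comm (f : ColoredPartialIso e) : ColoredPartialIso e :=
  ⟨f.1.comm, fun ⟨_, _⟩ hp => (f.2 _ (PartialIso.mem_comm_iff.1 hp)).symm⟩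

theorem exists_across [NoMinOrder X] [NoMaxOrder X] (he : IsDenseColoring e)
    (f : ColoredPartialIso e) (a : X) :
    ∃ b, (∀ p ∈ f.1.val, cmp p.1 a = cmp p.2 b) ∧ e b = e a := by
  by_cases h : ∃ b, (a, b) ∈ f.1.val
  · obtain ⟨b, hb⟩ := h
    exact ⟨b, fun p hp => f.1.2 _ hp _ hb, (f.2 _ hb).symm⟩
  have : Nonempty X := ⟨a⟩
  obtain ⟨b, hlo, hhi, hb⟩ := he.exists_between_finsets a
    ({p ∈ f.1.val | p.1 < a}.image Prod.snd) ({p ∈ f.1.val | a < p.1}.image Prod.snd) <| by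
      simp only [Finset.mem_image, Finset.mem_filter]
      rintro _ ⟨p, ⟨hp, hpa⟩, rfl⟩ _ ⟨q, ⟨hq, haq⟩, rfl⟩
      exact (lt_iff_lt_of_cmp_eq_cmp (f.1.2 _ hp _ hq)).1 (hpa.trans haq)
  refine ⟨b, fun ⟨p₁, p₂⟩ hp => ?_, hb⟩
  rcases lt_trichotomy p₁ a with hpa | rfl | hap
  · have : p₂ < b := hlo _ (Finset.mem_image_of_mem _ (Finset.mem_filter.2 ⟨hp, hpa⟩))
    rw [(cmp_eq_lt_iff _ _).2 hpa, (cmp_eq_lt_iff _ _).2 this]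
  · exact absurd ⟨p₂, hp⟩ h
  · have : b < p₂ := hhi _ (Finset.mem_image_of_mem _ (Finset.mem_filter.2 ⟨hp, hap⟩))
    rw [(cmp_eq_gt_iff _ _).2 hap, (cmp_eq_gt_iff _ _).2 this]

variable [NoMinOrder X] [NoMaxOrder X]

def definedAtLeft (he : IsDenseColoring e) (a : X) : Cofinal (ColoredPartialIso e) where
  carrier := {f | ∃ b, (a, b) ∈ f.1.val}
  isCofinal f := by
    obtain ⟨b, hcmp, hb⟩ := exists_across he f a
    refine ⟨⟨⟨insert (a, b) f.1.val, ?_⟩, ?_⟩, ⟨b, Finset.mem_insert_self _ _⟩,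
      Finset.subset_insert _ _⟩
    · simp only [Finset.forall_mem_insert, cmp_self_eq_eq, true_and]
      exact ⟨fun q hq => by rw [cmp_eq_cmp_symm]; exact hcmp q hq,
        fun p hp => ⟨hcmp p hp, f.1.2 p hp⟩⟩
    · simpa only [Finset.forall_mem_insert] using ⟨hb.symm, f.2⟩

def definedAtRight (he : IsDenseColoring e) (b : X) : Cofinal (ColoredPartialIso e) where
  carrier := {f | ∃ a, (a, b) ∈ f.1.val}
  isCofinal f := by
    obtain ⟨f', ⟨a, ha⟩, hle⟩ := (definedAtLeft he b).isCofinal f.comm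
    exact ⟨f'.comm, ⟨a, PartialIso.mem_comm_iff.2 ha⟩, fun ⟨x, y⟩ hxy =>
      PartialIso.mem_comm_iff.2 (hle (PartialIso.mem_comm_iff.2 hxy))⟩

end ColoredPartialIso

open ColoredPartialIso in
theorem IsDenseColoring.exists_orderIso_apply_eq [Countable X] [NoMinOrder X] [NoMaxOrder X]
    (he : IsDenseColoring e) {p p' : X} (hp : e p = e p') :
    ∃ g : X ≃o X, g p = p' ∧ ∀ x, e (g x) = e x := by
  cases nonempty_encodable X
  let seed : ColoredPartialIso e := ⟨⟨{(p, p')}, by simp⟩, by simpa using hp⟩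
  let D : X ⊕ X → Cofinal (ColoredPartialIso e) := Sum.elim (definedAtLeft he) (definedAtRight he)
  let I := idealOfCofinals seed D
  have total_left (a : X) : ∃ b, ∃ f ∈ I, (a, b) ∈ f.1.val :=
    let ⟨f, ⟨b, hb⟩, hf⟩ := cofinal_meets_idealOfCofinals seed D (inl a)
    ⟨b, f, hf, hb⟩
  have total_right (b : X) : ∃ a, ∃ f ∈ I, (a, b) ∈ f.1.val :=
    let ⟨f, ⟨a, ha⟩, hf⟩ := cofinal_meets_idealOfCofinals seed D (inr b)
    ⟨a, f, hf, ha⟩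
  choose F fF hfFI hfF using total_left
  choose G fG hfGI hfG using total_right
  have compat {f₁ f₂} (h₁ : f₁ ∈ I) (h₂ : f₂ ∈ I) {x y : X × X} (hx : x ∈ f₁.1.val)
      (hy : y ∈ f₂.1.val) : cmp x.1 y.1 = cmp x.2 y.2 := by
    obtain ⟨m, -, h₁m, h₂m⟩ := I.directed _ h₁ _ h₂
    exact m.1.2 x (h₁m hx) y (h₂m hy)
  refine ⟨OrderIso.ofCmpEqCmp F G fun a b => compat (hfFI a) (hfGI b) (hfF a) (hfG b), ?_,
    fun x => ((fF x).2 _ (hfF x)).symm⟩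
  have hFp := compat (hfFI p) (mem_idealOfCofinals seed D) (hfF p)
    (Finset.mem_singleton_self (p, p'))
  rw [cmp_self_eq_eq, eq_comm, cmp_eq_eq_iff] at hFp
  exact hFp

theorem exists_Ioo_isDenseColoring {α : Type*} [LinearOrder α] [Nontrivial α] [Finite C]
    (d : α → C) : ∃ a b : α, a < b ∧ IsDenseColoring fun x : Ioo a b => d x := by
  -- an interval meeting the fewest colours meets all of them on each of its subintervals
  obtain ⟨⟨a, b⟩, hab, hmin⟩ := (InvImage.wf (fun p : α × α => (d '' Ioo p.1 p.2).ncard)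
    wellFounded_lt).has_min {p | p.1 < p.2} (let ⟨u, v, huv⟩ := exists_pair_lt α; ⟨(u, v), huv⟩)
  refine ⟨a, b, hab, fun w u v huv => ?_⟩
  have hsub : Ioo (u : α) v ⊆ Ioo a b := Ioo_subset_Ioo u.2.1.le v.2.2.le
  have himage : d '' Ioo (u : α) v = d '' Ioo a b :=
    eq_of_subset_of_ncard_le (image_mono hsub) (not_lt.1 (hmin (u, v) huv))
  obtain ⟨z, hz, hzw⟩ := himage ▸ mem_image_of_mem d w.2
  exact ⟨⟨z, hsub hz⟩, hz.1, hz.2, hzw⟩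

end Order

theorem Set.OrdConnected.exists_orderIso_extend {α : Type*} [LinearOrder α] {s : Set α}
    (hs : s.OrdConnected) (g : s ≃o s) :
    ∃ f : α ≃o α, (∀ x : s, f x = g x) ∧ ∀ x ∉ s, f x = x := by
  classical
  let φ := Equiv.Perm.ofSubtype g.toEquiv
  have hφs (x : α) (hx : x ∈ s) : φ x = g ⟨x, hx⟩ := Equiv.Perm.ofSubtype_apply_of_mem _ hx
  have hφo (x : α) (hx : x ∉ s) : φ x = x := Equiv.Perm.ofSubtype_apply_of_not_mem _ hx
  have above {x y : α} (hx : x ∈ s) (hy : y ∉ s) (hxy : x < y) (z : s) : (z : α) < y :=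
    not_le.1 fun hyz => hy (hs.out hx z.2 ⟨hxy.le, hyz⟩)
  have below {x y : α} (hx : x ∉ s) (hy : y ∈ s) (hxy : x < y) (z : s) : x < z :=
    not_le.1 fun hzx => hx (hs.out z.2 hy ⟨hzx, hxy.le⟩)
  have hφ : StrictMono φ := by
    intro x y hxy
    by_cases hx : x ∈ s <;> by_cases hy : y ∈ s
    · rw [hφs x hx, hφs y hy]
      exact g.lt_iff_lt.2 hxy
    · rw [hφs x hx, hφo y hy]
      exact above hx hy hxy _
    · rw [hφo x hx, hφs y hy]
      exact below hx hy hxy _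
    · rwa [hφo x hx, hφo y hy]
  exact ⟨⟨φ, hφ.le_iff_le⟩, fun x => hφs x x.2, hφo⟩

theorem exists_orderIso_ne_refl_forall_apply_eq {α C : Type*} [LinearOrder α] [DenselyOrdered α]
    [Nontrivial α] [Countable α] [Finite C] (d : α → C) :
    ∃ f : α ≃o α, f ≠ OrderIso.refl α ∧ ∀ x, d (f x) = d x := by
  obtain ⟨a, b, hab, hd⟩ := Order.exists_Ioo_isDenseColoring d
  obtain ⟨w, hw⟩ := exists_between hab
  obtain ⟨u, hu⟩ := exists_lt (⟨w, hw⟩ : Ioo a b)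
  obtain ⟨z, -, hzw, hz⟩ := hd ⟨w, hw⟩ u ⟨w, hw⟩ hu
  obtain ⟨g, hgz, hg⟩ := hd.exists_orderIso_apply_eq hz
  obtain ⟨f, hfs, hfo⟩ := ordConnected_Ioo.exists_orderIso_extend g
  refine ⟨f, fun hf => hzw.ne (Subtype.ext ?_), fun x => ?_⟩
  · simpa [hgz, hf] using hfs z
  · by_cases hx : x ∈ Ioo a b
    · simpa [hfs ⟨x, hx⟩] using hg ⟨x, hx⟩
    · rw [hfo x hx]

def G.isoOfOrderIso (f : ℚ ≃o ℚ) : G ≃g G :=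
  ⟨Equiv.sumCongr f.toEquiv f.toEquiv, by rintro (q | q) (r | r) <;> simp [G]⟩

theorem G_no_finite_distinguishing (C : Type) [Finite C] (c : ℚ ⊕ ℚ → C) :
    ∃ φ : G ≃g G, φ ≠ (SimpleGraph.Iso.refl : G ≃g G) ∧ ∀ v : ℚ ⊕ ℚ, c (φ v) = c v := by
  obtain ⟨f, hf, hfc⟩ := exists_orderIso_ne_refl_forall_apply_eq fun q => (c (inl q), c (inr q))
  refine ⟨G.isoOfOrderIso f, fun h => hf (OrderIso.ext (funext fun q => ?_)), ?_⟩
  · simpa [G.isoOfOrderIso] using DFunLike.congr_fun h (inl q)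
  · rintro (q | q)
    · exact congrArg Prod.fst (hfc q)
    · exact congrArg Prod.snd (hfc q)
end
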